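/- Maximum of the perturbed difference lies in the no-action region (Lemma 4.3): let u, v : [0,T] × Ō → ℝ be such that (t,x,y) ↦ u(t,x,y,z) and (t,x,y) ↦ v(t,x,y,z) are continuous for each z ∈ K, and suppose v ≥ Sv pointwise on [0,T] × Ō. Let ρ = ½ min{c(z) : z ∈ K, z ≠ 0}, C₅ = C₄ (max(C₂,C₃) + 1) + 2ρ, g(t,x,y,z) = x + y + C₅(T − t), and for ε > 0 set vᵉ = v + ε g and H = u − vᵉ. Assume the joint sublinear growth condition: for each z ∈ K, sup_{t ∈ [0,T]} (u − v)(t,x,y,z)⁺ / (1 + x + y) → 0 as x + y → ∞ with (x,y,z) ∈ Ō. Then H attains its maximum over [0,T] × Ō at some point (t̂, x̂, ŷ, ẑ), and at any such maximizer one has (u − Su)(t̂, x̂, ŷ, ẑ) > 0. -/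

import Mathlib

open scoped Classical

/-- The set of admissible stock positions `K = {-C₂, …, C₃}`. -/
noncomputable def Kset (C₂ C₃ : ℕ) : Finset ℤ := Finset.Icc (-(C₂ : ℤ)) (C₃ : ℤ)

/-- The set of admissible post-transaction positions
`Γ(y,z) = {z̃ ∈ K : z̃ ≠ z, c(z̃ - z) + c(-z̃) ≤ y}`. -/
noncomputable def Gamma (C₂ C₃ : ℕ) (c : ℤ → ℝ) (y : ℝ) (z : ℤ) : Finset ℤ :=
  (Kset C₂ C₃).filter fun z' => z' ≠ z ∧ c (z' - z) + c (-z') ≤ y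

/-- The closed solvency region `Ō = {(x,y,z) : x ≥ 0, y ≥ c(-z), z ∈ K}`. -/
def Obar (C₂ C₃ : ℕ) (c : ℤ → ℝ) : Set (ℝ × ℝ × ℤ) :=
  {p | 0 ≤ p.1 ∧ c (-p.2.2) ≤ p.2.1 ∧ p.2.2 ∈ Kset C₂ C₃}

/-- The intervention operator with values in `ℝ ∪ {-∞} ⊆ EReal`:
`(Su)(t,x,y,z) = max_{z̃ ∈ Γ(y,z)} u(t, x, y - c(z̃ - z), z̃)`, `-∞` if `Γ(y,z) = ∅`. -/
noncomputable def SopE (C₂ C₃ : ℕ) (c : ℤ → ℝ) (u : ℝ → ℝ → ℝ → ℤ → ℝ)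
    (t x y : ℝ) (z : ℤ) : EReal :=
  (Gamma C₂ C₃ c y z).sup fun z' => ((u t x (y - c (z' - z)) z' : ℝ) : EReal)

/-- `ρ = ½ min{c(z) : z ∈ K, z ≠ 0}`. -/
noncomputable def rho (C₂ C₃ : ℕ) (c : ℤ → ℝ) : ℝ :=
  (1 / 2) * sInf (c '' {z : ℤ | z ∈ Kset C₂ C₃ ∧ z ≠ 0})

/-!
Since `u - v` grows sublinearly in `x + y` while `ε g` grows linearly, on each slice `z = const`
the function `H` is below any given value outside a compact box; so it attains its maximum on every
slice, and `K` is finite. At a maximizer, every transaction `z̃ ∈ Γ(ŷ, ẑ)` strictly lowers `vᵉ`: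
`v` does not increase because `v ≥ Sv`, and `g` drops by the cost `c(z̃ - ẑ) > 0`. As `H = u - vᵉ`
does not increase either, `u` must drop strictly.
-/

open Set Filter Topology

theorem Finset.exists_forall_le_of_forall_isMaxOn {ι α β : Type*} [LinearOrder β]
    {K : Finset ι} (hK : K.Nonempty) {S : ι → Set α} {f : ι → α → β}
    (h : ∀ i ∈ K, ∃ a ∈ S i, IsMaxOn (f i) (S i) a) :
    ∃ i ∈ K, ∃ a ∈ S i, ∀ j ∈ K, ∀ b ∈ S j, f j b ≤ f i a := by
  have : Nonempty α := by
    obtain ⟨i, hi⟩ := hK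
    exact ⟨(h i hi).choose⟩
  choose! g hgS hgmax using h
  obtain ⟨i, hi, himax⟩ := K.exists_max_image (fun i => f i (g i)) hK
  exact ⟨i, hi, g i, hgS i hi, fun j hj b hb => (hgmax j hj hb).trans (himax j hj)⟩

/-- The paper's `vᵉ = v + ε g` with `g(t,x,y,z) = x + y + C₅ (T - t)`. -/
noncomputable def vEps (v : ℝ → ℝ → ℝ → ℤ → ℝ) (ε C₅ T : ℝ) (t x y : ℝ) (z : ℤ) : ℝ :=
  v t x y z + ε * (x + y + C₅ * (T - t))

def domainSlice (C₂ C₃ : ℕ) (c : ℤ → ℝ) (T : ℝ) (z : ℤ) : Set (ℝ × ℝ × ℝ) :=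
  {p | p.1 ∈ Icc 0 T ∧ (p.2.1, p.2.2, z) ∈ Obar C₂ C₃ c}

section

variable {C₂ C₃ : ℕ} {c : ℤ → ℝ}

theorem zero_mem_kset : (0 : ℤ) ∈ Kset C₂ C₃ :=
  Finset.mem_Icc.2 ⟨by omega, by omega⟩

theorem mem_obar_of_mem_gamma {x y : ℝ} {z z' : ℤ} (hO : (x, y, z) ∈ Obar C₂ C₃ c)
    (hz' : z' ∈ Gamma C₂ C₃ c y z) : (x, y - c (z' - z), z') ∈ Obar C₂ C₃ c := by
  obtain ⟨hz'K, -, hcost⟩ := Finset.mem_filter.1 hz'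
  exact ⟨hO.1, by simp only; linarith, hz'K⟩

theorem sopE_le_coe_iff {u : ℝ → ℝ → ℝ → ℤ → ℝ} {t x y a : ℝ} {z : ℤ} :
    SopE C₂ C₃ c u t x y z ≤ a ↔ ∀ z' ∈ Gamma C₂ C₃ c y z, u t x (y - c (z' - z)) z' ≤ a := by
  simp only [SopE, Finset.sup_le_iff, EReal.coe_le_coe_iff]

theorem sopE_lt_coe_iff {u : ℝ → ℝ → ℝ → ℤ → ℝ} {t x y a : ℝ} {z : ℤ} :
    SopE C₂ C₃ c u t x y z < a ↔ ∀ z' ∈ Gamma C₂ C₃ c y z, u t x (y - c (z' - z)) z' < a := by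
  simp only [SopE, Finset.sup_lt_iff (EReal.bot_lt_coe a), EReal.coe_lt_coe_iff]

theorem sopE_vEps_lt {v : ℝ → ℝ → ℝ → ℤ → ℝ} {ε C₅ T t x y : ℝ} {z : ℤ}
    (hcpos : ∀ z : ℤ, z ≠ 0 → 0 < c z) (hε : 0 < ε)
    (hv : SopE C₂ C₃ c v t x y z ≤ v t x y z) :
    SopE C₂ C₃ c (vEps v ε C₅ T) t x y z < vEps v ε C₅ T t x y z := by
  refine sopE_lt_coe_iff.2 fun z' hz' => ?_
  have hvz' := sopE_le_coe_iff.1 hv z' hz'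
  have hcost : 0 < ε * c (z' - z) :=
    mul_pos hε (hcpos _ (sub_ne_zero.2 (Finset.mem_filter.1 hz').2.1))
  simp only [vEps]
  linarith

theorem sopE_lt_of_forall_sub_le {u w : ℝ → ℝ → ℝ → ℤ → ℝ} {t x y : ℝ} {z : ℤ}
    (hO : (x, y, z) ∈ Obar C₂ C₃ c)
    (hmax : ∀ y' z', (x, y', z') ∈ Obar C₂ C₃ c →
      u t x y' z' - w t x y' z' ≤ u t x y z - w t x y z)
    (hw : SopE C₂ C₃ c w t x y z < w t x y z) :
    SopE C₂ C₃ c u t x y z < u t x y z := by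
  refine sopE_lt_coe_iff.2 fun z' hz' => ?_
  have := hmax _ _ (mem_obar_of_mem_gamma hO hz')
  have := sopE_lt_coe_iff.1 hw z' hz'
  linarith

theorem isClosed_domainSlice (T : ℝ) (z : ℤ) : IsClosed (domainSlice C₂ C₃ c T z) := by
  show IsClosed ({p : ℝ × ℝ × ℝ | p.1 ∈ Icc 0 T} ∩ ({p | 0 ≤ p.2.1} ∩
    ({p | c (-z) ≤ p.2.2} ∩ {_p | z ∈ Kset C₂ C₃})))
  exact (isClosed_Icc.preimage continuous_fst).inter <|
    (isClosed_le continuous_const (continuous_fst.comp continuous_snd)).inter <|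
    (isClosed_le continuous_const (continuous_snd.comp continuous_snd)).inter isClosed_const

theorem lt_add_of_mem_domainSlice_of_notMem {T M : ℝ} {z : ℤ} {p : ℝ × ℝ × ℝ}
    (hp : p ∈ domainSlice C₂ C₃ c T z)
    (hpK : p ∉ Icc 0 T ×ˢ Icc 0 (M - c (-z)) ×ˢ Icc (c (-z)) M) : M < p.2.1 + p.2.2 := by
  obtain ⟨ht, hx, hy, -⟩ := hp
  by_contra! h
  exact hpK ⟨ht, ⟨hx, by linarith⟩, hy, by linarith⟩

theorem exists_forall_sub_vEps_le {u v : ℝ → ℝ → ℝ → ℤ → ℝ} {ε C₅ T : ℝ} {z : ℤ} (hε : 0 < ε)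
    (hgrowth : ∀ δ : ℝ, 0 < δ → ∃ M : ℝ, ∀ t x y : ℝ,
      t ∈ Icc 0 T → (x, y, z) ∈ Obar C₂ C₃ c → M ≤ x + y →
      max (u t x y z - v t x y z) 0 ≤ δ * (1 + x + y))
    (b : ℝ) :
    ∃ M : ℝ, ∀ p ∈ domainSlice C₂ C₃ c T z, M ≤ p.2.1 + p.2.2 →
      u p.1 p.2.1 p.2.2 z - vEps v ε C₅ T p.1 p.2.1 p.2.2 z ≤ b := by
  obtain ⟨M, hM⟩ := hgrowth (ε / 2) (half_pos hε)
  -- `u - vᵉ ≤ ε/2 (1 + x + y) - ε (x + y) + ε |C₅| T` on the slice, and this is `≤ b`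
  -- as soon as `x + y` also exceeds the second bound.
  refine ⟨max M (1 + 2 * (|C₅| * T) - 2 * b / ε), fun ⟨t, x, y⟩ ⟨ht, hO⟩ hxy => ?_⟩
  have hgrow := (le_max_left _ _).trans (hM t x y ht hO ((le_max_left _ _).trans hxy))
  have hlarge := mul_le_mul_of_nonneg_left ((le_max_right _ _).trans hxy) hε.le
  have hscale : ε * (1 + 2 * (|C₅| * T) - 2 * b / ε) = ε + 2 * (ε * (|C₅| * T)) - 2 * b := by
    field_simp
  have htime : -(|C₅| * T) ≤ C₅ * (T - t) := by
    nlinarith [neg_abs_le C₅, abs_nonneg C₅, ht.1, ht.2]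
  have := mul_le_mul_of_nonneg_left htime hε.le
  simp only [vEps]
  linarith

theorem exists_isMaxOn_domainSlice {u v : ℝ → ℝ → ℝ → ℤ → ℝ} {ε C₅ T : ℝ} {z : ℤ}
    (hT : 0 ≤ T) (hε : 0 < ε) (hz : z ∈ Kset C₂ C₃)
    (hucont : ContinuousOn (fun p : ℝ × ℝ × ℝ => u p.1 p.2.1 p.2.2 z) (domainSlice C₂ C₃ c T z))
    (hvcont : ContinuousOn (fun p : ℝ × ℝ × ℝ => v p.1 p.2.1 p.2.2 z) (domainSlice C₂ C₃ c T z))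
    (hgrowth : ∀ δ : ℝ, 0 < δ → ∃ M : ℝ, ∀ t x y : ℝ,
      t ∈ Icc 0 T → (x, y, z) ∈ Obar C₂ C₃ c → M ≤ x + y →
      max (u t x y z - v t x y z) 0 ≤ δ * (1 + x + y)) :
    ∃ p ∈ domainSlice C₂ C₃ c T z, IsMaxOn
      (fun p : ℝ × ℝ × ℝ => u p.1 p.2.1 p.2.2 z - vEps v ε C₅ T p.1 p.2.1 p.2.2 z)
      (domainSlice C₂ C₃ c T z) p := by
  have hp₀ : ((0 : ℝ), (0 : ℝ), c (-z)) ∈ domainSlice C₂ C₃ c T z :=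
    ⟨⟨le_rfl, hT⟩, le_rfl, le_rfl, hz⟩
  obtain ⟨M, hM⟩ := exists_forall_sub_vEps_le (C₅ := C₅) hε hgrowth
    (u 0 0 (c (-z)) z - vEps v ε C₅ T 0 0 (c (-z)) z)
  have hcont : ContinuousOn
      (fun p : ℝ × ℝ × ℝ => u p.1 p.2.1 p.2.2 z - vEps v ε C₅ T p.1 p.2.1 p.2.2 z)
      (domainSlice C₂ C₃ c T z) := by
    simp only [vEps]
    exact hucont.sub (hvcont.add (by fun_prop))
  have hbox : IsCompact (Icc 0 T ×ˢ Icc 0 (M - c (-z)) ×ˢ Icc (c (-z)) M) :=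
    isCompact_Icc.prod (isCompact_Icc.prod isCompact_Icc)
  refine hcont.exists_isMaxOn' (isClosed_domainSlice T z) hp₀ ?_
  filter_upwards [inter_mem_inf hbox.compl_mem_cocompact (mem_principal_self _)]
    with p ⟨hpK, hp⟩
  exact hM p hp (lt_add_of_mem_domainSlice_of_notMem hp hpK).le

end

theorem max_in_no_action_general (C₂ C₃ : ℕ)
    (c : ℤ → ℝ) (hcpos : ∀ z : ℤ, z ≠ 0 → 0 < c z)
    (T : ℝ) (hT : 0 < T)
    (u v : ℝ → ℝ → ℝ → ℤ → ℝ)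
    (hucont : ∀ z ∈ Kset C₂ C₃, ContinuousOn (fun p : ℝ × ℝ × ℝ => u p.1 p.2.1 p.2.2 z)
      {p : ℝ × ℝ × ℝ | p.1 ∈ Set.Icc 0 T ∧ (p.2.1, p.2.2, z) ∈ Obar C₂ C₃ c})
    (hvcont : ∀ z ∈ Kset C₂ C₃, ContinuousOn (fun p : ℝ × ℝ × ℝ => v p.1 p.2.1 p.2.2 z)
      {p : ℝ × ℝ × ℝ | p.1 ∈ Set.Icc 0 T ∧ (p.2.1, p.2.2, z) ∈ Obar C₂ C₃ c})
    (hvS : ∀ t x y : ℝ, ∀ z : ℤ, t ∈ Set.Icc 0 T → (x, y, z) ∈ Obar C₂ C₃ c →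
      SopE C₂ C₃ c v t x y z ≤ ((v t x y z : ℝ) : EReal))
    (hgrowth : ∀ z ∈ Kset C₂ C₃, ∀ δ : ℝ, 0 < δ → ∃ M : ℝ, ∀ t x y : ℝ,
      t ∈ Set.Icc 0 T → (x, y, z) ∈ Obar C₂ C₃ c → M ≤ x + y →
      max (u t x y z - v t x y z) 0 ≤ δ * (1 + x + y))
    (C₅ : ℝ)
    (ε : ℝ) (hε : 0 < ε)
    (H : ℝ → ℝ → ℝ → ℤ → ℝ)
    (hH : ∀ t x y : ℝ, ∀ z : ℤ,
      H t x y z = u t x y z - (v t x y z + ε * (x + y + C₅ * (T - t)))) :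
    (∃ th xh yh : ℝ, ∃ zh : ℤ, th ∈ Set.Icc 0 T ∧ (xh, yh, zh) ∈ Obar C₂ C₃ c ∧
      ∀ t x y : ℝ, ∀ z : ℤ, t ∈ Set.Icc 0 T → (x, y, z) ∈ Obar C₂ C₃ c →
        H t x y z ≤ H th xh yh zh) ∧
    (∀ th xh yh : ℝ, ∀ zh : ℤ, th ∈ Set.Icc 0 T → (xh, yh, zh) ∈ Obar C₂ C₃ c →
      (∀ t x y : ℝ, ∀ z : ℤ, t ∈ Set.Icc 0 T → (x, y, z) ∈ Obar C₂ C₃ c →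
        H t x y z ≤ H th xh yh zh) →
      SopE C₂ C₃ c u th xh yh zh < ((u th xh yh zh : ℝ) : EReal)) := by
  obtain rfl : H = fun t x y z => u t x y z - vEps v ε C₅ T t x y z := by
    funext t x y z
    exact hH t x y z
  refine ⟨?_, fun th xh yh zh hth hO hmax => ?_⟩
  · obtain ⟨z, -, p, hp, hmax⟩ := (Kset C₂ C₃).exists_forall_le_of_forall_isMaxOn
      ⟨0, zero_mem_kset⟩ fun z hz =>
        exists_isMaxOn_domainSlice hT.le hε hz (hucont z hz) (hvcont z hz) (hgrowth z hz)
    exact ⟨p.1, p.2.1, p.2.2, z, hp.1, hp.2,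
      fun t x y z' ht hO => hmax z' hO.2.2 (t, x, y) ⟨ht, hO⟩⟩
  · exact sopE_lt_of_forall_sub_le hO (fun y' z' hO' => hmax th xh y' z' hth hO')
      (sopE_vEps_lt hcpos hε (hvS th xh yh zh hth hO))

/-- Maximum of the perturbed difference lies in the no-action region (Lemma 4.3):
with `vᵉ = v + εg`, `H = u - vᵉ` attains its maximum over `[0,T] × Ō`, and at any
maximizer `(t̂,x̂,ŷ,ẑ)` one has `(u - Su)(t̂,x̂,ŷ,ẑ) > 0`. -/
theorem max_in_no_action (C₂ C₃ : ℕ) (hC₂ : 0 < C₂) (hC₃ : 0 < C₃)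
    (c : ℤ → ℝ) (hc0 : c 0 = 0) (hcpos : ∀ z : ℤ, z ≠ 0 → 0 < c z)
    (T : ℝ) (hT : 0 < T) (C₄ : ℝ) (hC₄ : 0 < C₄)
    (u v : ℝ → ℝ → ℝ → ℤ → ℝ)
    (hucont : ∀ z ∈ Kset C₂ C₃, ContinuousOn (fun p : ℝ × ℝ × ℝ => u p.1 p.2.1 p.2.2 z)
      {p : ℝ × ℝ × ℝ | p.1 ∈ Set.Icc 0 T ∧ (p.2.1, p.2.2, z) ∈ Obar C₂ C₃ c})
    (hvcont : ∀ z ∈ Kset C₂ C₃, ContinuousOn (fun p : ℝ × ℝ × ℝ => v p.1 p.2.1 p.2.2 z)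
      {p : ℝ × ℝ × ℝ | p.1 ∈ Set.Icc 0 T ∧ (p.2.1, p.2.2, z) ∈ Obar C₂ C₃ c})
    (hvS : ∀ t x y : ℝ, ∀ z : ℤ, t ∈ Set.Icc 0 T → (x, y, z) ∈ Obar C₂ C₃ c →
      SopE C₂ C₃ c v t x y z ≤ ((v t x y z : ℝ) : EReal))
    (hgrowth : ∀ z ∈ Kset C₂ C₃, ∀ δ : ℝ, 0 < δ → ∃ M : ℝ, ∀ t x y : ℝ,
      t ∈ Set.Icc 0 T → (x, y, z) ∈ Obar C₂ C₃ c → M ≤ x + y →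
      max (u t x y z - v t x y z) 0 ≤ δ * (1 + x + y))
    (C₅ : ℝ) (hC₅ : C₅ = C₄ * (max (C₂ : ℝ) (C₃ : ℝ) + 1) + 2 * rho C₂ C₃ c)
    (ε : ℝ) (hε : 0 < ε)
    (H : ℝ → ℝ → ℝ → ℤ → ℝ)
    (hH : ∀ t x y : ℝ, ∀ z : ℤ,
      H t x y z = u t x y z - (v t x y z + ε * (x + y + C₅ * (T - t)))) :
    (∃ th xh yh : ℝ, ∃ zh : ℤ, th ∈ Set.Icc 0 T ∧ (xh, yh, zh) ∈ Obar C₂ C₃ c ∧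
      ∀ t x y : ℝ, ∀ z : ℤ, t ∈ Set.Icc 0 T → (x, y, z) ∈ Obar C₂ C₃ c →
        H t x y z ≤ H th xh yh zh) ∧
    (∀ th xh yh : ℝ, ∀ zh : ℤ, th ∈ Set.Icc 0 T → (xh, yh, zh) ∈ Obar C₂ C₃ c →
      (∀ t x y : ℝ, ∀ z : ℤ, t ∈ Set.Icc 0 T → (x, y, z) ∈ Obar C₂ C₃ c →
        H t x y z ≤ H th xh yh zh) →
      SopE C₂ C₃ c u th xh yh zh < ((u th xh yh zh : ℝ) : EReal)) :=
  max_in_no_action_general C₂ C₃ c hcpos T hT u v hucont hvcont hvS hgrowth C₅ ε hε H hH
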